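/- Strong convergence of a single fluctuation operator: for v ∈ ℓ¹₃(L), n ∈ ℕ, ψ_n ∈ 𝒟_n, and J ∈ (1/2)ℕ₀ with 2J > n+1, ‖[F(ṽ) − F_J(v)] ψ_n‖ ≤ 4 |v|₁ n (2J)^{−1/2} ‖ψ_n‖; consequently F_J(v) → F(ṽ) in the strong resolvent sense as J → ∞. -/

import Mathlib

/-- Total particle number of an occupation-number configuration. -/
def deg {L : Type*} (m : L →₀ ℕ) : ℕ := m.sum fun _ k => k

/-- The algebraic `n`-particle subspace: the span of the occupation-number basis
vectors with total particle number `n`. -/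
def nSector {L : Type*} {F : Type*} [NormedAddCommGroup F] [InnerProductSpace ℂ F]
    (e : (L →₀ ℕ) → F) (n : ℕ) : Submodule ℂ F :=
  Submodule.span ℂ (e '' {m | deg m = n})

/-- Dyson's function `g_J(k) = max(1 − k/(2J), 0)`, written in terms of `2J`. -/
noncomputable def gDyson (twoJ : ℝ) (k : ℕ) : ℝ := max (1 - k / twoJ) 0

/-- The `ℓ¹`-norm of an `ℝ³`-valued sequence given by its rotated components
(transverse component `vt x = ṽ¹_x + iṽ²_x` and third component `v3 x = ṽ³_x`). -/
noncomputable def l1norm {L : Type*} (vt : L → ℂ) (v3 : L → ℝ) : ℝ :=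
  ∑' x, Real.sqrt (‖vt x‖ ^ 2 + v3 x ^ 2)

/-! On a basis vector `e m` of the `n`-particle sector, `F(ṽ) − F_J(v)` acts site by site
through the moves `m ↦ m ± δₓ` and `m ↦ m`. Since `1 − √(1 − t) ≤ t` for `t = mₓ/2J ≤ 1`, the
coefficients of these moves are at most `|ṽₓ| n (2J)^(-1/2)` and `2|ṽ³ₓ| n (2J)^(-1/2)`. For a
fixed site each move is injective on the configurations where its coefficient is nonzero, so it
sends orthonormal combinations to orthonormal combinations, and the contribution of site `x` to
`[F(ṽ) − F_J(v)]ψ` has norm at most `4 |vₓ| n (2J)^(-1/2) ‖ψ‖`; summing over `x` gives the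
bound, and strong convergence follows as `2J → ∞`. -/

lemma abs_le_two_mul_sqrt_sq_add_sq (a b : ℝ) : |a| + |b| ≤ 2 * √(a ^ 2 + b ^ 2) := by
  have ha : |a| ≤ √(a ^ 2 + b ^ 2) := Real.abs_le_sqrt (by nlinarith)
  have hb : |b| ≤ √(a ^ 2 + b ^ 2) := Real.abs_le_sqrt (by nlinarith)
  linarith

lemma gDyson_of_le {K : ℝ} {j : ℕ} (hjK : j ≤ K) (hK : 0 < K) : gDyson K j = 1 - j / K :=
  max_eq_left (sub_nonneg.2 ((div_le_one hK).2 hjK))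

lemma abs_sqrt_succ_sub_sqrt_mul_gDyson_le {j k : ℕ} (hjk : j < k) :
    |√((j : ℝ) + 1) - √(((j : ℝ) + 1) * gDyson k j)| ≤ j / √k := by
  have hk : (0 : ℝ) < k := by exact_mod_cast (Nat.zero_le j).trans_lt hjk
  have hjk' : (j : ℝ) < k := by exact_mod_cast hjk
  set t : ℝ := j / k
  have ht0 : 0 ≤ t := by positivity
  have ht1 : t ≤ 1 := (div_le_one hk).2 hjk'.le
  have hs := Real.sq_sqrt (sub_nonneg.2 ht1)
  have hs1 : √(1 - t) ≤ 1 := Real.sqrt_le_one.2 (by linarith)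
  have hgap : 1 - √(1 - t) ≤ t := by nlinarith [Real.sqrt_nonneg (1 - t)]
  have hroot : √((j : ℝ) + 1) ≤ √k := Real.sqrt_le_sqrt (by exact_mod_cast hjk)
  rw [gDyson_of_le hjk'.le hk, Real.sqrt_mul (by positivity),
    show √((j : ℝ) + 1) - √((j : ℝ) + 1) * √(1 - t) = √((j : ℝ) + 1) * (1 - √(1 - t)) by ring,
    abs_of_nonneg (mul_nonneg (Real.sqrt_nonneg _) (sub_nonneg.2 hs1))]
  calc √((j : ℝ) + 1) * (1 - √(1 - t)) ≤ √k * t := by gcongr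
    _ = j / √k := by
        have hk' := Real.sq_sqrt hk.le
        have : √(k : ℝ) ≠ 0 := (Real.sqrt_pos.2 hk).ne'
        simp only [t]
        field_simp
        rw [hk', mul_comm]

lemma abs_sqrt_sub_sqrt_mul_gDyson_pred_le {j n k : ℕ} (hjn : j ≤ n) (hnk : n < k) :
    |√(j : ℝ) - √((j : ℝ) * gDyson k (j - 1))| ≤ n / √k := by
  rcases j with _ | i
  · simp only [Nat.cast_zero, Real.sqrt_zero, zero_mul, sub_zero, abs_zero]
    positivity
  · push_cast
    refine (abs_sqrt_succ_sub_sqrt_mul_gDyson_le (by omega)).trans ?_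
    gcongr
    exact_mod_cast (Nat.le_succ i).trans hjn

lemma abs_sqrt_four_div_mul_le {j n k : ℕ} (hjn : j ≤ n) (a : ℝ) :
    |√(4 / (k : ℝ)) * a * j| ≤ |a| * (2 * n / √k) := by
  rw [Real.sqrt_div' _ (Nat.cast_nonneg k), show √(4 : ℝ) = 2 by
    rw [show (4 : ℝ) = 2 ^ 2 by norm_num, Real.sqrt_sq zero_le_two], abs_mul, abs_mul,
    Nat.abs_cast, abs_of_nonneg (by positivity)]
  have : (j : ℝ) ≤ n := by exact_mod_cast hjn
  calc 2 / √k * |a| * j ≤ 2 / √k * |a| * n := by gcongr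
    _ = |a| * (2 * n / √k) := by ring

section Orthonormal

variable {𝕜 ι E : Type*} [RCLike 𝕜] [NormedAddCommGroup E] [InnerProductSpace 𝕜 E]

lemma Orthonormal.norm_sum_smul_sq {e : ι → E} (he : Orthonormal 𝕜 e) (s : Finset ι)
    (l : ι → 𝕜) : ‖∑ i ∈ s, l i • e i‖ ^ 2 = ∑ i ∈ s, ‖l i‖ ^ 2 := by
  simpa using he.orthogonalFamily.norm_sum l s

lemma Orthonormal.norm_sum_smul {e : ι → E} (he : Orthonormal 𝕜 e) (s : Finset ι)
    (l : ι → 𝕜) : ‖∑ i ∈ s, l i • e i‖ = √(∑ i ∈ s, ‖l i‖ ^ 2) := by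
  rw [← he.norm_sum_smul_sq, Real.sqrt_sq (norm_nonneg _)]

lemma Orthonormal.norm_sum_mul_smul_comp_le {I : Type*} {e : I → E} (he : Orthonormal 𝕜 e)
    {s : Finset ι} {σ : ι → I} {d : ι → 𝕜} (hσ : Set.InjOn σ {i | i ∈ s ∧ d i ≠ 0})
    {β : ℝ} (hβ : 0 ≤ β) (hd : ∀ i ∈ s, ‖d i‖ ≤ β) (c : ι → 𝕜) :
    ‖∑ i ∈ s, (d i * c i) • e (σ i)‖ ≤ β * √(∑ i ∈ s, ‖c i‖ ^ 2) := by
  classical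
  set s' := s.filter fun i => d i ≠ 0
  have hσ' : Function.Injective fun i : s' => σ i := fun i j h =>
    Subtype.ext (hσ (Finset.mem_filter.1 i.2) (Finset.mem_filter.1 j.2) h)
  have hsum : ∑ i ∈ s, (d i * c i) • e (σ i)
      = ∑ i : s', (d i * c i) • (e ∘ fun i : s' => σ i) i := by
    rw [← Finset.sum_filter_of_ne (p := fun i => d i ≠ 0) fun i _ h hd0 => h (by simp [hd0]),
      ← Finset.sum_coe_sort]
    rfl
  have hsq : ∑ i ∈ s', ‖d i * c i‖ ^ 2 ≤ β ^ 2 * ∑ i ∈ s, ‖c i‖ ^ 2 := by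
    rw [Finset.mul_sum]
    refine (Finset.sum_le_sum fun i hi => ?_).trans
      (Finset.sum_le_sum_of_subset_of_nonneg (Finset.filter_subset _ s) fun _ _ _ => by positivity)
    rw [norm_mul, mul_pow]
    gcongr
    exact hd i (Finset.mem_filter.1 hi).1
  rw [hsum, (he.comp _ hσ').norm_sum_smul, Finset.sum_coe_sort s' fun i => ‖d i * c i‖ ^ 2,
    ← Real.sqrt_sq hβ, ← Real.sqrt_mul (sq_nonneg β)]
  exact Real.sqrt_le_sqrt hsq

end Orthonormal

lemma Finsupp.injOn_tsub_single {L : Type*} (x : L) :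
    Set.InjOn (· - Finsupp.single x 1) {m : L →₀ ℕ | m x ≠ 0} := fun _ hm _ hm' h =>
  have single_le {p : L →₀ ℕ} (hp : p x ≠ 0) : Finsupp.single x 1 ≤ p :=
    Finsupp.single_le_iff.2 (Nat.one_le_iff_ne_zero.2 hp)
  (tsub_left_inj (single_le hm) (single_le hm')).1 h

section LadderTerms

variable {L F : Type*} [NormedAddCommGroup F] [InnerProductSpace ℂ F] (vt : L → ℂ) (v3 : L → ℝ)

-- the `x`-summands of `F(ṽ) e_m` and of `F_J(v) e_m`, with `k = 2J`
noncomputable def bosonTerm (e : (L →₀ ℕ) → F) (m : L →₀ ℕ) (x : L) : F :=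
  (vt x * √(m x + 1)) • e (m + Finsupp.single x 1)
    + (starRingEnd ℂ (vt x) * √(m x)) • e (m - Finsupp.single x 1)

noncomputable def dysonTerm (e : (L →₀ ℕ) → F) (k : ℕ) (m : L →₀ ℕ) (x : L) : F :=
  (vt x * √((m x + 1) * gDyson k (m x))) • e (m + Finsupp.single x 1)
    + (starRingEnd ℂ (vt x) * √(m x * gDyson k (m x - 1))) • e (m - Finsupp.single x 1)
    + (-((√(4 / (k : ℝ)) * v3 x * m x : ℝ) : ℂ)) • e m

variable {e : (L →₀ ℕ) → F}

lemma bosonTerm_sub_dysonTerm (k : ℕ) (m : L →₀ ℕ) (x : L) :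
    bosonTerm vt e m x - dysonTerm vt v3 e k m x =
      (vt x * (√((m x : ℝ) + 1) - √(((m x : ℝ) + 1) * gDyson k (m x)) : ℝ)) •
          e (m + Finsupp.single x 1)
        + (starRingEnd ℂ (vt x) * (√(m x : ℝ) - √((m x : ℝ) * gDyson k (m x - 1)) : ℝ)) •
          e (m - Finsupp.single x 1)
        + ((√(4 / (k : ℝ)) * v3 x * m x : ℝ) : ℂ) • e m := by
  simp only [bosonTerm, dysonTerm, Complex.ofReal_sub]
  module

lemma norm_bosonTerm_le (he : Orthonormal ℂ e) (m : L →₀ ℕ) (x : L) :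
    ‖bosonTerm vt e m x‖ ≤ 2 * √((deg m : ℝ) + 1) * ‖vt x‖ := by
  have hmx : (m x : ℝ) ≤ deg m := by exact_mod_cast Finsupp.le_degree x m
  have h1 : √((m x : ℝ) + 1) ≤ √((deg m : ℝ) + 1) := Real.sqrt_le_sqrt (by linarith)
  have h2 : √(m x : ℝ) ≤ √((deg m : ℝ) + 1) := Real.sqrt_le_sqrt (by linarith)
  refine (norm_add_le _ _).trans ?_
  simp only [norm_smul, he.norm_eq_one, mul_one, norm_mul, RCLike.norm_conj, Complex.norm_real,
    Real.norm_eq_abs, abs_of_nonneg (Real.sqrt_nonneg _)]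
  nlinarith [norm_nonneg (vt x)]

lemma summable_bosonTerm [CompleteSpace F] (he : Orthonormal ℂ e)
    (hvt : Summable fun x => ‖vt x‖) (m : L →₀ ℕ) : Summable (bosonTerm vt e m) :=
  .of_norm_bounded (hvt.mul_left _) (norm_bosonTerm_le vt he m)

lemma norm_sum_smul_bosonTerm_sub_dysonTerm_le (he : Orthonormal ℂ e) {n k : ℕ} (hnk : n < k)
    {s : Finset (L →₀ ℕ)} (hs : ∀ m ∈ s, ∀ y, m y ≤ n) (c : (L →₀ ℕ) → ℂ) (x : L) :
    ‖∑ m ∈ s, c m • (bosonTerm vt e m x - dysonTerm vt v3 e k m x)‖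
      ≤ 2 * (‖vt x‖ + |v3 x|) * (n / √k) * √(∑ m ∈ s, ‖c m‖ ^ 2) := by
  set a : (L →₀ ℕ) → ℂ := fun m =>
    vt x * (√((m x : ℝ) + 1) - √(((m x : ℝ) + 1) * gDyson k (m x)) : ℝ)
  set b : (L →₀ ℕ) → ℂ := fun m =>
    starRingEnd ℂ (vt x) * (√(m x : ℝ) - √((m x : ℝ) * gDyson k (m x - 1)) : ℝ)
  set d : (L →₀ ℕ) → ℂ := fun m => ((√(4 / (k : ℝ)) * v3 x * m x : ℝ) : ℂ)
  have hsplit : ∑ m ∈ s, c m • (bosonTerm vt e m x - dysonTerm vt v3 e k m x)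
      = ∑ m ∈ s, (a m * c m) • e (m + Finsupp.single x 1)
        + ∑ m ∈ s, (b m * c m) • e (m - Finsupp.single x 1)
        + ∑ m ∈ s, (d m * c m) • e (id m) := by
    simp only [bosonTerm_sub_dysonTerm, ← Finset.sum_add_distrib]
    exact Finset.sum_congr rfl fun m _ => by simp only [a, b, d, id]; module
  have ha : ∀ m ∈ s, ‖a m‖ ≤ ‖vt x‖ * (n / √k) := fun m hm => by
    simp only [a, norm_mul, Complex.norm_real, Real.norm_eq_abs]
    gcongr
    refine (abs_sqrt_succ_sub_sqrt_mul_gDyson_le ((hs m hm x).trans_lt hnk)).trans ?_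
    gcongr
    exact_mod_cast hs m hm x
  have hb : ∀ m ∈ s, ‖b m‖ ≤ ‖vt x‖ * (n / √k) := fun m hm => by
    simp only [b, norm_mul, RCLike.norm_conj, Complex.norm_real, Real.norm_eq_abs]
    gcongr
    exact abs_sqrt_sub_sqrt_mul_gDyson_pred_le (hs m hm x) hnk
  have hd : ∀ m ∈ s, ‖d m‖ ≤ |v3 x| * (2 * n / √k) := fun m hm => by
    simpa only [d, Complex.norm_real, Real.norm_eq_abs] using
      abs_sqrt_four_div_mul_le (hs m hm x) (v3 x)
  have hraise : Set.InjOn (· + Finsupp.single x 1) {m | m ∈ s ∧ a m ≠ 0} :=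
    (add_left_injective _).injOn
  have hlower : Set.InjOn (· - Finsupp.single x 1) {m | m ∈ s ∧ b m ≠ 0} := by
    refine (Finsupp.injOn_tsub_single x).mono fun m hm (hmx : m x = 0) => hm.2 ?_
    simp [b, hmx]
  rw [hsplit]
  calc _ ≤ _ := norm_add₃_le
    _ ≤ ‖vt x‖ * (n / √k) * √(∑ m ∈ s, ‖c m‖ ^ 2) + ‖vt x‖ * (n / √k) * √(∑ m ∈ s, ‖c m‖ ^ 2)
        + |v3 x| * (2 * n / √k) * √(∑ m ∈ s, ‖c m‖ ^ 2) := by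
      gcongr
      · exact he.norm_sum_mul_smul_comp_le hraise (by positivity) ha c
      · exact he.norm_sum_mul_smul_comp_le hlower (by positivity) hb c
      · exact he.norm_sum_mul_smul_comp_le (Set.injOn_id _) (by positivity) hd c
    _ = 2 * (‖vt x‖ + |v3 x|) * (n / √k) * √(∑ m ∈ s, ‖c m‖ ^ 2) := by ring

lemma summable_bosonTerm_sub_dysonTerm [CompleteSpace F] (he : Orthonormal ℂ e)
    (hv : Summable fun x => ‖vt x‖ + |v3 x|) {n k : ℕ} (hnk : n < k) {m : L →₀ ℕ}
    (hm : ∀ y, m y ≤ n) : Summable fun x => bosonTerm vt e m x - dysonTerm vt v3 e k m x := by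
  refine .of_norm_bounded (hv.mul_left (2 * (n / √k))) fun x => ?_
  have := norm_sum_smul_bosonTerm_sub_dysonTerm_le vt v3 he hnk (s := {m})
    (by simpa using hm) 1 x
  simp only [Finset.sum_singleton, Pi.one_apply, one_smul, norm_one, one_pow,
    Real.sqrt_one, mul_one] at this
  linarith

lemma apply_sub_apply_eq_tsum [CompleteSpace F] (he : Orthonormal ℂ e)
    (hv : Summable fun x => ‖vt x‖ + |v3 x|) {n k : ℕ} (hnk : n < k) (Fb FJ : F →ₗ[ℂ] F)
    (hFb : ∀ m, Fb (e m) = ∑' x, bosonTerm vt e m x)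
    (hFJ : ∀ m : L →₀ ℕ, (∀ x, m x ≤ k) → FJ (e m) = ∑' x, dysonTerm vt v3 e k m x)
    {m : L →₀ ℕ} (hm : ∀ y, m y ≤ n) :
    Fb (e m) - FJ (e m) = ∑' x, (bosonTerm vt e m x - dysonTerm vt v3 e k m x) := by
  have hvt : Summable fun x => ‖vt x‖ :=
    hv.of_nonneg_of_le (fun x => norm_nonneg _) fun x => le_add_of_nonneg_right (abs_nonneg _)
  have hboson := summable_bosonTerm vt he hvt m
  have hdyson : Summable (dysonTerm vt v3 e k m) :=
    (hboson.sub (summable_bosonTerm_sub_dysonTerm vt v3 he hv hnk hm)).congr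
      fun x => sub_sub_cancel _ _
  rw [hFb, hFJ m fun x => (hm x).trans hnk.le, hboson.tsum_sub hdyson]

theorem norm_apply_sub_apply_le_of_mem_nSector [CompleteSpace F] (he : Orthonormal ℂ e)
    (hv1 : Summable fun x => √(‖vt x‖ ^ 2 + v3 x ^ 2)) {n k : ℕ} (hnk : n < k)
    (Fb FJ : F →ₗ[ℂ] F) (hFb : ∀ m, Fb (e m) = ∑' x, bosonTerm vt e m x)
    (hFJ : ∀ m : L →₀ ℕ, (∀ x, m x ≤ k) → FJ (e m) = ∑' x, dysonTerm vt v3 e k m x)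
    {ψ : F} (hψ : ψ ∈ nSector e n) :
    ‖Fb ψ - FJ ψ‖ ≤ 4 * l1norm vt v3 * n / √k * ‖ψ‖ := by
  classical
  have hΦ : ∀ x, ‖vt x‖ + |v3 x| ≤ 2 * √(‖vt x‖ ^ 2 + v3 x ^ 2) := fun x => by
    simpa using abs_le_two_mul_sqrt_sq_add_sq ‖vt x‖ (v3 x)
  have hv : Summable fun x => ‖vt x‖ + |v3 x| :=
    (hv1.mul_left 2).of_nonneg_of_le (fun x => by positivity) hΦ
  obtain ⟨c, hc, rfl⟩ := (Finsupp.mem_span_image_iff_linearCombination ℂ).1 hψ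
  have hs : ∀ m ∈ c.support, ∀ y, m y ≤ n := fun m hm y =>
    (hc hm : deg m = n) ▸ Finsupp.le_degree y m
  have hψ : Finsupp.linearCombination ℂ e c = ∑ m ∈ c.support, c m • e m :=
    Finsupp.linearCombination_apply ℂ c
  set r := √(∑ m ∈ c.support, ‖c m‖ ^ 2)
  set D := fun x => ∑ m ∈ c.support, c m • (bosonTerm vt e m x - dysonTerm vt v3 e k m x)
  have hD : ∀ x, ‖D x‖ ≤ √(‖vt x‖ ^ 2 + v3 x ^ 2) * (4 * n / √k * r) := fun x => by
    refine (norm_sum_smul_bosonTerm_sub_dysonTerm_le vt v3 he hnk hs c x).trans ?_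
    calc _ ≤ 2 * (2 * √(‖vt x‖ ^ 2 + v3 x ^ 2)) * (n / √k) * r := by gcongr; exact hΦ x
      _ = _ := by ring
  have hDnorm : Summable fun x => ‖D x‖ :=
    .of_nonneg_of_le (fun x => norm_nonneg _) hD (hv1.mul_right _)
  have hdiff : Fb (Finsupp.linearCombination ℂ e c) - FJ (Finsupp.linearCombination ℂ e c)
      = ∑' x, D x := by
    rw [Summable.tsum_finsetSum fun m hm =>
        (summable_bosonTerm_sub_dysonTerm vt v3 he hv hnk (hs m hm)).const_smul (c m),
      hψ, map_sum, map_sum, ← Finset.sum_sub_distrib]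
    refine Finset.sum_congr rfl fun m hm => ?_
    rw [map_smul, map_smul, ← smul_sub,
      apply_sub_apply_eq_tsum vt v3 he hv hnk Fb FJ hFb hFJ (hs m hm),
      (summable_bosonTerm_sub_dysonTerm vt v3 he hv hnk (hs m hm)).tsum_const_smul]
  calc ‖_‖ = ‖∑' x, D x‖ := by rw [hdiff]
    _ ≤ ∑' x, ‖D x‖ := norm_tsum_le_tsum_norm hDnorm
    _ ≤ ∑' x, √(‖vt x‖ ^ 2 + v3 x ^ 2) * (4 * n / √k * r) :=
      hDnorm.tsum_le_tsum hD (hv1.mul_right _)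
    _ = 4 * l1norm vt v3 * n / √k * ‖Finsupp.linearCombination ℂ e c‖ := by
      rw [tsum_mul_right, hψ, he.norm_sum_smul, l1norm]
      ring

end LadderTerms

theorem stmt14_general {L : Type*} {F : Type*} [NormedAddCommGroup F] [InnerProductSpace ℂ F]
    [CompleteSpace F]
    (e : (L →₀ ℕ) → F) (he : Orthonormal ℂ e)
    (vt : L → ℂ) (v3 : L → ℝ)
    (hv1 : Summable fun x => Real.sqrt (‖vt x‖ ^ 2 + v3 x ^ 2))
    -- the Dyson operators `F_J(v)`, indexed by `k = 2J ∈ ℕ`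
    (FJ : ℕ → (F →ₗ[ℂ] F))
    (hFJ : ∀ (k : ℕ) (m : L →₀ ℕ), 0 < k → (∀ x, m x ≤ k) →
      FJ k (e m) = ∑' x : L,
          (((vt x) * Real.sqrt ((m x + 1) * gDyson (k : ℝ) (m x))) • e (m + Finsupp.single x 1)
            + ((starRingEnd ℂ) (vt x) * Real.sqrt ((m x) * gDyson (k : ℝ) (m x - 1))) •
                e (m - Finsupp.single x 1)
            + (-((Real.sqrt (4 / (k : ℝ)) * v3 x * m x : ℝ) : ℂ)) • e m))
    -- the boson field operator `F(ṽ)`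
    (Fb : F →ₗ[ℂ] F)
    (hFb : ∀ m : L →₀ ℕ, Fb (e m) = ∑' x : L,
          (((vt x) * Real.sqrt (m x + 1)) • e (m + Finsupp.single x 1)
            + ((starRingEnd ℂ) (vt x) * Real.sqrt (m x)) • e (m - Finsupp.single x 1))) :
    (∀ (k : ℕ) (n : ℕ), (n : ℝ) + 1 < k → ∀ ψ ∈ nSector e n,
        ‖Fb ψ - FJ k ψ‖ ≤ 4 * l1norm vt v3 * n / Real.sqrt k * ‖ψ‖)
      ∧ ∀ (n : ℕ) (ψ : F), ψ ∈ nSector e n →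
          Filter.Tendsto (fun k : ℕ => FJ k ψ) Filter.atTop (nhds (Fb ψ)) := by
  have hbound : ∀ (k n : ℕ), n < k → ∀ ψ ∈ nSector e n,
      ‖Fb ψ - FJ k ψ‖ ≤ 4 * l1norm vt v3 * n / √k * ‖ψ‖ := fun k n hnk ψ hψ =>
    norm_apply_sub_apply_le_of_mem_nSector vt v3 he hv1 hnk Fb (FJ k) hFb
      (fun m => hFJ k m (by omega)) hψ
  refine ⟨fun k n hnk => hbound k n (by exact_mod_cast (by linarith : (n : ℝ) < k)),
    fun n ψ hψ => ?_⟩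
  have hlim : Filter.Tendsto (fun k : ℕ => 4 * l1norm vt v3 * n / √k * ‖ψ‖) Filter.atTop
      (nhds 0) := by
    simpa using (tendsto_const_nhds.div_atTop
      (Real.tendsto_sqrt_atTop.comp tendsto_natCast_atTop_atTop)).mul_const ‖ψ‖
  rw [tendsto_iff_norm_sub_tendsto_zero]
  refine squeeze_zero' (.of_forall fun k => norm_nonneg _) ?_ hlim
  filter_upwards [Filter.eventually_gt_atTop n] with k hk
  rw [norm_sub_rev]
  exact hbound k n hk ψ hψ

/-- Strong convergence of a single fluctuation operator: for `v ∈ ℓ¹₃(L)`,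
`ψ` in the `n`-particle subspace and `2J > n+1`,
`‖[F(ṽ) − F_J(v)]ψ‖ ≤ 4|v|₁ n (2J)^(−1/2) ‖ψ‖`; consequently `F_J(v)ψ → F(ṽ)ψ`
as `J → ∞` (strong convergence on the finite-particle domain, hence strong
resolvent convergence). -/
theorem stmt14 {L : Type*} {F : Type*} [NormedAddCommGroup F] [InnerProductSpace ℂ F]
    [CompleteSpace F]
    (e : (L →₀ ℕ) → F) (he : Orthonormal ℂ e)
    (vt : L → ℂ) (v3 : L → ℝ)
    (hv1 : Summable fun x => Real.sqrt (‖vt x‖ ^ 2 + v3 x ^ 2))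
    -- the Dyson operators `F_J(v)`, indexed by `k = 2J ∈ ℕ`
    (FJ : ℕ → (F →ₗ[ℂ] F))
    (hFJ0 : ∀ (k : ℕ) (m : L →₀ ℕ), (∃ x, (k : ℝ) < m x) → FJ k (e m) = 0)
    (hFJ : ∀ (k : ℕ) (m : L →₀ ℕ), 0 < k → (∀ x, m x ≤ k) →
      FJ k (e m) = ∑' x : L,
          (((vt x) * Real.sqrt ((m x + 1) * gDyson (k : ℝ) (m x))) • e (m + Finsupp.single x 1)
            + ((starRingEnd ℂ) (vt x) * Real.sqrt ((m x) * gDyson (k : ℝ) (m x - 1))) •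
                e (m - Finsupp.single x 1)
            + (-((Real.sqrt (4 / (k : ℝ)) * v3 x * m x : ℝ) : ℂ)) • e m))
    -- the boson field operator `F(ṽ)`
    (Fb : F →ₗ[ℂ] F)
    (hFb : ∀ m : L →₀ ℕ, Fb (e m) = ∑' x : L,
          (((vt x) * Real.sqrt (m x + 1)) • e (m + Finsupp.single x 1)
            + ((starRingEnd ℂ) (vt x) * Real.sqrt (m x)) • e (m - Finsupp.single x 1))) :
    (∀ (k : ℕ) (n : ℕ), (n : ℝ) + 1 < k → ∀ ψ ∈ nSector e n,
        ‖Fb ψ - FJ k ψ‖ ≤ 4 * l1norm vt v3 * n / Real.sqrt k * ‖ψ‖)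
      ∧ ∀ (n : ℕ) (ψ : F), ψ ∈ nSector e n →
          Filter.Tendsto (fun k : ℕ => FJ k ψ) Filter.atTop (nhds (Fb ψ)) :=
  stmt14_general e he vt v3 hv1 FJ hFJ Fb hFb
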